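/- arXiv:2107.05118 — 4 statements merged into one kernel-verified Lean document; each statement's English description precedes it below -/
import Mathlib

section
/- For an integer n ≥ 2 and the n-th roots of unity a_j = e^{2πij/n}, the sum over i ≠ j of (a_j - a_i)/‖a_j - a_i‖³ equals s₁ · a_j, where s₁ = (1/4) ∑_{j=1}^{n-1} 1/sin(jπ/n). -/
open Real Finset

lemma one_sub_exp_eq (n k : ℕ) (hn : 1 ≤ n) :
    1 - Complex.exp (2 * π * Complex.I * k / n)
      = ((2 * Real.sin (k * π / n) : ℝ) : ℂ) *
        ((Real.sin (k * π / n) : ℂ) - (Real.cos (k * π / n) : ℂ) * Complex.I) := by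
  have hn0 : (n:ℂ) ≠ 0 := by exact_mod_cast (by omega : n ≠ 0)
  set x : ℝ := (k:ℝ) * π / n with hx
  have h1 : 2 * π * Complex.I * k / n = ((2 * x : ℝ) : ℂ) * Complex.I := by
    rw [hx]; push_cast; field_simp
  rw [h1]
  apply Complex.ext <;>
    simp only [Complex.sub_re, Complex.sub_im, Complex.one_re, Complex.one_im,
      Complex.exp_ofReal_mul_I_re, Complex.exp_ofReal_mul_I_im, Complex.mul_re, Complex.mul_im,
      Complex.ofReal_re, Complex.ofReal_im, Complex.I_re, Complex.I_im]
  · rw [Real.cos_two_mul]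
    nlinarith [Real.sin_sq_add_cos_sq x]
  · rw [Real.sin_two_mul]; ring

lemma sin_pos_of (n k : ℕ) (hn : 2 ≤ n) (hk1 : 1 ≤ k) (hk2 : k ≤ n - 1) :
    0 < Real.sin ((k:ℝ) * π / n) := by
  apply Real.sin_pos_of_pos_of_lt_pi
  · have : (0:ℝ) < π := Real.pi_pos
    have hk : (0:ℝ) < k := by exact_mod_cast hk1
    have hnp : (0:ℝ) < n := by positivity
    positivity
  · have hkn : (k:ℝ) < n := by exact_mod_cast (by omega : k < n)
    have hnp : (0:ℝ) < n := by positivity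
    rw [div_lt_iff₀ hnp]
    nlinarith [Real.pi_pos]

lemma norm_one_sub_exp (n k : ℕ) (hn : 2 ≤ n) (hk1 : 1 ≤ k) (hk2 : k ≤ n - 1) :
    ‖1 - Complex.exp (2 * π * Complex.I * k / n)‖ = 2 * Real.sin ((k:ℝ) * π / n) := by
  rw [one_sub_exp_eq n k (by omega)]
  set s := Real.sin ((k:ℝ) * π / n)
  set c := Real.cos ((k:ℝ) * π / n)
  have hs : 0 < s := sin_pos_of n k hn hk1 hk2
  have hw : ‖(s : ℂ) - (c : ℂ) * Complex.I‖ = 1 := by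
    rw [Complex.norm_def, Complex.normSq_apply]
    simp only [Complex.sub_re, Complex.sub_im, Complex.mul_re, Complex.mul_im,
      Complex.ofReal_re, Complex.ofReal_im, Complex.I_re, Complex.I_im]
    rw [show (s - (c * 0 - 0 * 1)) * (s - (c * 0 - 0 * 1)) + (0 - (c * 1 + 0 * 0)) * (0 - (c * 1 + 0 * 0)) = 1 by
      have := Real.sin_sq_add_cos_sq ((k:ℝ) * π / n); nlinarith]
    exact Real.sqrt_one
  rw [norm_mul, hw, mul_one, Complex.norm_real, Real.norm_eq_abs, abs_of_pos (by linarith)]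

lemma term_eq (n k : ℕ) (hn : 2 ≤ n) (hk1 : 1 ≤ k) (hk2 : k ≤ n - 1) :
    (1 - Complex.exp (2 * π * Complex.I * k / n)) /
        ((‖1 - Complex.exp (2 * π * Complex.I * k / n)‖ : ℝ) : ℂ)^3
      = ((1 / (4 * Real.sin ((k:ℝ) * π / n)) : ℝ) : ℂ)
        - Complex.I * ((Real.cos ((k:ℝ) * π / n) / (4 * (Real.sin ((k:ℝ) * π / n))^2) : ℝ) : ℂ) := by
  rw [norm_one_sub_exp n k hn hk1 hk2, one_sub_exp_eq n k (by omega)]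
  have hs : 0 < Real.sin ((k:ℝ) * π / n) := sin_pos_of n k hn hk1 hk2
  set s := Real.sin ((k:ℝ) * π / n)
  set c := Real.cos ((k:ℝ) * π / n)
  have hsC : (s : ℂ) ≠ 0 := by exact_mod_cast hs.ne'
  push_cast
  field_simp
  ring

lemma imag_sum_zero (n : ℕ) (hn : 2 ≤ n) :
    ∑ k ∈ Finset.Icc 1 (n-1),
      Real.cos ((k:ℝ) * π / n) / (4 * (Real.sin ((k:ℝ) * π / n))^2) = 0 := by
  apply Finset.sum_involution (fun k _ => n - k)
  · intro k hk
    simp only [Finset.mem_Icc] at hk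
    have hcast : ((n - k : ℕ) : ℝ) = (n:ℝ) - k := by
      push_cast [Nat.cast_sub (by omega : k ≤ n)]; ring
    have hn0 : (n:ℝ) ≠ 0 := by positivity
    have harg : ((n - k : ℕ) : ℝ) * π / n = π - (k:ℝ) * π / n := by
      rw [hcast]; field_simp
    rw [harg, Real.cos_pi_sub, Real.sin_pi_sub]
    ring
  · intro k hk hne
    simp only [Finset.mem_Icc] at hk
    intro heq
    apply hne
    have h2k : n = 2 * k := by omega
    have : (k:ℝ) * π / n = π / 2 := by
      rw [h2k]; push_cast
      have : (k:ℝ) ≠ 0 := by exact_mod_cast (by omega : k ≠ 0)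
      field_simp
    rw [this, Real.cos_pi_div_two]
    simp
  · intro k hk
    simp only [Finset.mem_Icc] at hk ⊢
    omega
  · intro k hk
    simp only [Finset.mem_Icc] at hk
    omega

lemma sum_f (n : ℕ) (hn : 2 ≤ n) :
    ∑ k ∈ Finset.Icc 1 (n-1),
        (1 - Complex.exp (2 * π * Complex.I * k / n)) /
          ((‖1 - Complex.exp (2 * π * Complex.I * k / n)‖ : ℝ) : ℂ)^3
      = (((1/4) * ∑ k ∈ Finset.Icc 1 (n-1), 1 / Real.sin ((k:ℝ) * π / n) : ℝ) : ℂ) := by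
  rw [Finset.sum_congr rfl (fun k hk => by
    simp only [Finset.mem_Icc] at hk
    exact term_eq n k hn hk.1 hk.2)]
  rw [Finset.sum_sub_distrib, ← Finset.mul_sum, ← Complex.ofReal_sum, ← Complex.ofReal_sum,
    imag_sum_zero n hn]
  have hreal : ∑ k ∈ Finset.Icc 1 (n-1), 1 / (4 * Real.sin ((k:ℝ) * π / n))
      = (1/4) * ∑ k ∈ Finset.Icc 1 (n-1), 1 / Real.sin ((k:ℝ) * π / n) := by
    rw [Finset.mul_sum]
    exact Finset.sum_congr rfl fun k _ => by rw [div_mul_div_comm]; norm_num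
  rw [hreal]
  simp

lemma arg_eq (n m : ℕ) : 2 * π * Complex.I * m / n = (((2 * m * π / n : ℝ)) : ℂ) * Complex.I := by
  push_cast; ring

lemma exp_period (n m : ℕ) (hn : 1 ≤ n) :
    Complex.exp (2 * π * Complex.I * ((m % n : ℕ):ℂ) / n)
      = Complex.exp (2 * π * Complex.I * m / n) := by
  have hn0 : (n:ℂ) ≠ 0 := by exact_mod_cast (by omega : n ≠ 0)
  have hm : (m : ℂ) = (n:ℂ) * ((m / n : ℕ):ℂ) + ((m % n : ℕ):ℂ) := by
    exact_mod_cast (Nat.div_add_mod m n).symm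
  have harg : 2 * π * Complex.I * m / n
      = 2 * π * Complex.I * ((m % n : ℕ):ℂ) / n + ((m / n : ℕ):ℂ) * (2 * π * Complex.I) := by
    rw [hm]; field_simp; ring
  have h1 : Complex.exp (((m / n : ℕ):ℂ) * (2 * π * Complex.I)) = 1 := by
    have := Complex.exp_int_mul_two_pi_mul_I ((m / n : ℕ) : ℤ)
    push_cast at this
    exact this
  rw [harg, Complex.exp_add, h1, mul_one]

lemma norm_exp_one (n m : ℕ) : ‖Complex.exp (2 * π * Complex.I * m / n)‖ = 1 := by
  rw [arg_eq, Complex.norm_exp_ofReal_mul_I]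

lemma mod_two_n (n x : ℕ) (hn : 0 < n) (hx : n ≤ x) (hx2 : x < 2*n) : x % n = x - n := by
  rw [Nat.mod_eq_sub_mod hx, Nat.mod_eq_of_lt (by omega)]


theorem polygon_force_identity (n : ℕ) (hn : 2 ≤ n)
    (a : ℕ → ℂ) (ha : ∀ j, a j = Complex.exp (2 * π * Complex.I * j / n))
    (s₁ : ℝ) (hs₁ : s₁ = (1/4) * ∑ j ∈ Finset.Icc 1 (n-1), 1 / Real.sin (j * π / n)) :
    ∀ j ∈ Finset.range n,
      ∑ i ∈ (Finset.range n).erase j, (a j - a i) / (‖a j - a i‖ : ℂ)^3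
        = (s₁ : ℂ) * a j := by
  intro j hj
  simp only [Finset.mem_range] at hj
  have hn0 : 0 < n := by omega
  have hmain : ∑ i ∈ (Finset.range n).erase j, (a j - a i) / (‖a j - a i‖ : ℂ)^3
      = ∑ k ∈ (Finset.range n).erase 0,
          a j * ((1 - Complex.exp (2 * π * Complex.I * k / n)) /
            ((‖1 - Complex.exp (2 * π * Complex.I * k / n)‖ : ℝ) : ℂ)^3) := by
    apply Finset.sum_nbij' (fun i => (i + (n - j)) % n) (fun k => (j + k) % n)
    · intro i hi
      simp only [Finset.mem_erase, Finset.mem_range] at hi ⊢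
      refine ⟨?_, Nat.mod_lt _ hn0⟩
      intro h0
      have hdvd := Nat.dvd_of_mod_eq_zero h0
      have := Nat.eq_of_dvd_of_lt_two_mul (by omega) hdvd (by omega)
      omega
    · intro k hk
      simp only [Finset.mem_erase, Finset.mem_range] at hk ⊢
      refine ⟨?_, Nat.mod_lt _ hn0⟩
      intro h0
      rcases lt_or_ge (j + k) n with h | h
      · rw [Nat.mod_eq_of_lt h] at h0; omega
      · rw [mod_two_n n (j+k) hn0 h (by omega)] at h0; omega
    · intro i hi
      simp only [Finset.mem_erase, Finset.mem_range] at hi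
      rw [Nat.add_mod_mod, show j + (i + (n - j)) = i + n by omega, Nat.add_mod_right,
        Nat.mod_eq_of_lt hi.2]
    · intro k hk
      simp only [Finset.mem_erase, Finset.mem_range] at hk
      rw [Nat.mod_add_mod, show j + k + (n - j) = k + n by omega, Nat.add_mod_right,
        Nat.mod_eq_of_lt hk.2]
    · intro i hi
      simp only [Finset.mem_erase, Finset.mem_range] at hi
      set k := (i + (n - j)) % n with hk
      have hjk : (j + k) % n = i := by
        rw [hk, Nat.add_mod_mod, show j + (i + (n - j)) = i + n by omega, Nat.add_mod_right,
          Nat.mod_eq_of_lt hi.2]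
      have hai : a i = a j * Complex.exp (2 * π * Complex.I * k / n) := by
        rw [ha i, ha j, ← Complex.exp_add, ← hjk, exp_period n (j+k) (by omega)]
        congr 1
        push_cast
        ring
      have hnorm : ‖a j - a i‖ = ‖1 - Complex.exp (2 * π * Complex.I * k / n)‖ := by
        rw [hai, show a j - a j * Complex.exp (2 * π * Complex.I * k / n)
            = a j * (1 - Complex.exp (2 * π * Complex.I * k / n)) by ring,
          norm_mul, ha j, norm_exp_one, one_mul]
      rw [hnorm, hai]
      rw [show a j - a j * Complex.exp (2 * π * Complex.I * k / n)
          = a j * (1 - Complex.exp (2 * π * Complex.I * k / n)) by ring, mul_div_assoc]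
  rw [hmain, ← Finset.mul_sum]
  have hset : (Finset.range n).erase 0 = Finset.Icc 1 (n-1) := by
    ext x; simp only [Finset.mem_erase, Finset.mem_range, Finset.mem_Icc]; omega
  rw [hset, sum_f n hn, hs₁, mul_comm]
end

section
/- Newton–Kantorovich-type contraction theorem: Let X be a finite-dimensional Banach space, U ⊂ X open, F : U → X Fréchet differentiable, ū ∈ U, A : X → X a bounded linear map, and r* > 0 with the closed ball B̄(ū, r*) ⊂ U. Suppose Y, Z > 0 satisfy ‖A F(ū)‖ ≤ Y and sup_{z ∈ B̄(ū,r*)} ‖I - A DF(z)‖ ≤ Z. If there exists r₀ ∈ (0, r*] with (Z-1)r₀ + Y < 0, then there exists a unique ũ ∈ B(ū, r₀) with F(ũ) = 0. -/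
open Metric ContinuousLinearMap

theorem newton_kantorovich
    {X : Type*} [NormedAddCommGroup X] [NormedSpace ℝ X] [FiniteDimensional ℝ X]
    (U : Set X) (hU : IsOpen U) (F : X → X) (hF : DifferentiableOn ℝ F U)
    (u₀ : X) (hu₀ : u₀ ∈ U) (A : X →L[ℝ] X)
    (rs : ℝ) (hrs : 0 < rs) (hball : closedBall u₀ rs ⊆ U)
    (Y Z : ℝ) (hY : 0 < Y) (hZ : 0 < Z)
    (hYb : ‖A (F u₀)‖ ≤ Y)
    (hZb : ∀ z ∈ closedBall u₀ rs,
      ‖(ContinuousLinearMap.id ℝ X) - A.comp (fderiv ℝ F z)‖ ≤ Z)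
    (r₀ : ℝ) (hr₀ : 0 < r₀) (hr₀rs : r₀ ≤ rs) (hp : (Z - 1) * r₀ + Y < 0) :
    ∃! u : X, u ∈ ball u₀ r₀ ∧ F u = 0 := by
  -- Z < 1
  have hZ1 : Z < 1 := by nlinarith
  set T : X → X := fun x => x - A (F x) with hT
  -- derivative of T
  have hderiv : ∀ x ∈ closedBall u₀ rs,
      HasFDerivWithinAt T (ContinuousLinearMap.id ℝ X - A.comp (fderiv ℝ F x))
        (closedBall u₀ rs) x := by
    intro x hx
    have hxU : x ∈ U := hball hx
    have hFd : HasFDerivAt F (fderiv ℝ F x) x :=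
      ((hF x hxU).differentiableAt (hU.mem_nhds hxU)).hasFDerivAt
    have : HasFDerivAt T (ContinuousLinearMap.id ℝ X - A.comp (fderiv ℝ F x)) x :=
      (hasFDerivAt_id x).sub (A.hasFDerivAt.comp x hFd)
    exact this.hasFDerivWithinAt
  -- Lipschitz estimate on the big ball
  have hlip : ∀ x ∈ closedBall u₀ rs, ∀ y ∈ closedBall u₀ rs,
      ‖T y - T x‖ ≤ Z * ‖y - x‖ := by
    intro x hx y hy
    exact (convex_closedBall u₀ rs).norm_image_sub_le_of_norm_hasFDerivWithin_le
      hderiv hZb hx hy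
  -- radius r₁ = Y / (1 - Z)
  set r₁ : ℝ := Y / (1 - Z) with hr₁def
  have h1Z : 0 < 1 - Z := by linarith
  have hr₁pos : 0 < r₁ := div_pos hY h1Z
  have hr₁lt : r₁ < r₀ := by
    rw [hr₁def, div_lt_iff₀ h1Z]; nlinarith
  have hr₁rs : r₁ ≤ rs := le_of_lt (lt_of_lt_of_le hr₁lt hr₀rs)
  have hsub : closedBall u₀ r₁ ⊆ closedBall u₀ rs :=
    closedBall_subset_closedBall hr₁rs
  have hfix : Z * r₁ + Y = r₁ := by
    have key : r₁ * (1 - Z) = Y := by rw [hr₁def]; exact div_mul_cancel₀ _ h1Z.ne'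
    linear_combination -key
  -- T maps the small ball into itself
  have hmaps : ∀ x ∈ closedBall u₀ r₁, T x ∈ closedBall u₀ r₁ := by
    intro x hx
    have hx' : x ∈ closedBall u₀ rs := hsub hx
    have h0 : u₀ ∈ closedBall u₀ rs := mem_closedBall_self hrs.le
    have h1 : ‖T x - T u₀‖ ≤ Z * ‖x - u₀‖ := hlip u₀ h0 x hx'
    have h2 : ‖T u₀ - u₀‖ ≤ Y := by
      have : T u₀ - u₀ = -(A (F u₀)) := by simp [hT]
      rw [this, norm_neg]; exact hYb
    have hxd : ‖x - u₀‖ ≤ r₁ := by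
      rw [← dist_eq_norm]; exact mem_closedBall.mp hx
    have : ‖T x - u₀‖ ≤ Z * r₁ + Y := by
      calc ‖T x - u₀‖ ≤ ‖T x - T u₀‖ + ‖T u₀ - u₀‖ := norm_sub_le_norm_sub_add_norm_sub _ _ _
        _ ≤ Z * ‖x - u₀‖ + Y := add_le_add h1 h2
        _ ≤ Z * r₁ + Y := by nlinarith
    rw [mem_closedBall, dist_eq_norm]
    linarith [hfix ▸ this]
  -- the fixed point via contraction on the subtype
  have hne : Nonempty (closedBall u₀ r₁) := ⟨⟨u₀, mem_closedBall_self hr₁pos.le⟩⟩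
  have hcs : CompleteSpace (closedBall u₀ r₁) :=
    (isClosed_closedBall.isComplete).completeSpace_coe
  set T' : closedBall u₀ r₁ → closedBall u₀ r₁ :=
    fun x => ⟨T x, hmaps x x.2⟩ with hT'
  have hcontr : ContractingWith ⟨Z, hZ.le⟩ T' := by
    constructor
    · exact_mod_cast hZ1
    · apply LipschitzWith.of_dist_le_mul
      intro x y
      have := hlip y (hsub y.2) x (hsub x.2)
      simp only [hT', Subtype.dist_eq, dist_eq_norm]
      exact this
  haveI := hne
  haveI := hcs
  set up : closedBall u₀ r₁ := ContractingWith.fixedPoint T' hcontr with hupdef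
  have hfp : T' up = up := ContractingWith.fixedPoint_isFixedPt hcontr
  set u : X := (up : X) with hudef
  have hTu : T u = u := congrArg Subtype.val hfp
  have hAFu : A (F u) = 0 := by
    have : u - A (F u) = u := hTu
    have := sub_eq_self.mp this
    exact this
  -- A is injective
  have hAinj : Function.Injective A := by
    have hDu : ‖(ContinuousLinearMap.id ℝ X) - A.comp (fderiv ℝ F u₀)‖ < 1 :=
      lt_of_le_of_lt (hZb u₀ (mem_closedBall_self hrs.le)) hZ1
    have hunit : IsUnit (A.comp (fderiv ℝ F u₀)) := by
      refine ⟨Units.oneSub ((ContinuousLinearMap.id ℝ X) - A.comp (fderiv ℝ F u₀)) hDu, ?_⟩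
      rw [Units.val_oneSub, ContinuousLinearMap.one_def, sub_sub_cancel]
    have hsurj : Function.Surjective (A.comp (fderiv ℝ F u₀)) := by
      obtain ⟨v, hv⟩ := hunit
      intro y
      exact ⟨(v.inv : X →L[ℝ] X) y, by
        have : (v : X →L[ℝ] X).comp (v.inv : X →L[ℝ] X) = 1 := by
          rw [← ContinuousLinearMap.mul_def]; exact_mod_cast v.val_inv
        calc (A.comp (fderiv ℝ F u₀)) ((v.inv : X →L[ℝ] X) y)
            = ((A.comp (fderiv ℝ F u₀)).comp (v.inv : X →L[ℝ] X)) y := by simp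
          _ = y := by rw [← hv, this]; rfl⟩
    have hAsurj : Function.Surjective A := fun y => by
      obtain ⟨x, hx⟩ := hsurj y; exact ⟨(fderiv ℝ F u₀) x, hx⟩
    exact (LinearMap.injective_iff_surjective (f := (A : X →ₗ[ℝ] X))).mpr hAsurj
  have hFu : F u = 0 := by
    apply hAinj
    simpa using hAFu
  have humem : u ∈ ball u₀ r₀ := by
    have : dist u u₀ ≤ r₁ := mem_closedBall.mp up.2
    exact mem_ball.mpr (lt_of_le_of_lt this hr₁lt)
  refine ⟨u, ⟨humem, hFu⟩, ?_⟩
  rintro v ⟨hvmem, hvF⟩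
  have hv' : v ∈ closedBall u₀ rs :=
    closedBall_subset_closedBall hr₀rs (ball_subset_closedBall hvmem)
  have hu' : u ∈ closedBall u₀ rs := hsub up.2
  have hTv : T v = v := by simp [hT, hvF]
  have := hlip u hu' v hv'
  rw [hTv, hTu] at this
  have hvu : (1 - Z) * ‖v - u‖ ≤ 0 := by nlinarith
  have : ‖v - u‖ ≤ 0 := by
    by_contra h
    push_neg at h
    nlinarith
  have : v - u = 0 := norm_le_zero_iff.mp this
  exact sub_eq_zero.mp this
end

section
/- Under the hypotheses of the Newton–Kantorovich theorem with Z < 1 on B̄(ū, r₀), the Newton-like operator T(u) = u - A F(u) maps B̄(ū, r₀) into B(ū, r₀) and is a contraction with Lipschitz constant Z on B̄(ū, r₀), provided Z r₀ + Y < r₀. -/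
open Metric ContinuousLinearMap

theorem newton_operator_contraction
    {X : Type*} [NormedAddCommGroup X] [NormedSpace ℝ X] [FiniteDimensional ℝ X]
    (U : Set X) (hU : IsOpen U) (F : X → X) (hF : DifferentiableOn ℝ F U)
    (u₀ : X) (r₀ : ℝ) (hr₀ : 0 < r₀) (hball : closedBall u₀ r₀ ⊆ U)
    (A : X →L[ℝ] X)
    (Y Z : ℝ)
    (hY : ‖A (F u₀)‖ ≤ Y)
    (hZ : ∀ z ∈ closedBall u₀ r₀,
      ‖(ContinuousLinearMap.id ℝ X) - A.comp (fderiv ℝ F z)‖ ≤ Z)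
    (hZ1 : Z < 1) (hp : Z * r₀ + Y < r₀)
    (T : X → X) (hT : ∀ u, T u = u - A (F u)) :
    (∀ u ∈ closedBall u₀ r₀, T u ∈ ball u₀ r₀) ∧
    (∀ u ∈ closedBall u₀ r₀, ∀ v ∈ closedBall u₀ r₀,
      ‖T u - T v‖ ≤ Z * ‖u - v‖) := by
  have hderiv : ∀ z ∈ closedBall u₀ r₀,
      HasFDerivWithinAt T ((ContinuousLinearMap.id ℝ X) - A.comp (fderiv ℝ F z))
        (closedBall u₀ r₀) z := by
    intro z hz
    have hFz : DifferentiableAt ℝ F z :=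
      (hF z (hball hz)).differentiableAt (hU.mem_nhds (hball hz))
    have h1 : HasFDerivAt (fun u => u - A (F u))
        ((ContinuousLinearMap.id ℝ X) - A.comp (fderiv ℝ F z)) z :=
      (hasFDerivAt_id z).sub (A.hasFDerivAt.comp z hFz.hasFDerivAt)
    have hTeq : T = fun u => u - A (F u) := funext hT
    rw [hTeq]
    exact h1.hasFDerivWithinAt
  have hlip : ∀ u ∈ closedBall u₀ r₀, ∀ v ∈ closedBall u₀ r₀,
      ‖T u - T v‖ ≤ Z * ‖u - v‖ := by
    intro u hu v hv
    exact (convex_closedBall u₀ r₀).norm_image_sub_le_of_norm_hasFDerivWithin_le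
      hderiv hZ hv hu
  refine ⟨?_, hlip⟩
  intro u hu
  have h0 : u₀ ∈ closedBall u₀ r₀ := mem_closedBall_self hr₀.le
  have h1 : ‖T u - T u₀‖ ≤ Z * ‖u - u₀‖ := hlip u hu u₀ h0
  have h2 : ‖T u₀ - u₀‖ ≤ Y := by
    rw [hT u₀]
    simpa using hY
  have h3 : ‖T u - u₀‖ ≤ Z * ‖u - u₀‖ + Y := by
    calc ‖T u - u₀‖ ≤ ‖T u - T u₀‖ + ‖T u₀ - u₀‖ := norm_sub_le_norm_sub_add_norm_sub _ _ _
      _ ≤ Z * ‖u - u₀‖ + Y := add_le_add h1 h2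
  have hZ0 : 0 ≤ Z := le_trans (norm_nonneg _) (hZ u₀ h0)
  have hu' : ‖u - u₀‖ ≤ r₀ := by simpa [dist_eq_norm] using hu
  have : ‖T u - u₀‖ < r₀ := by
    calc ‖T u - u₀‖ ≤ Z * ‖u - u₀‖ + Y := h3
      _ ≤ Z * r₀ + Y := by nlinarith
      _ < r₀ := hp
  simpa [mem_ball, dist_eq_norm] using this
end

section
/- Let a_j = (cos(2πj/n), sin(2πj/n), 0) be the regular n-gon and V(u;μ) the augmented potential with ω = μ - s₁. Then a = (a_0,…,a_{n-1}) is a critical point of V(·;μ): ∇_{u_j}V(a;μ) = (ω - μ + s₁) a_j = 0 for all j. -/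
open Real Finset

/-- The projection onto the `xy`-plane, `Ī = diag(1,1,0)`. -/
noncomputable def Ibar (v : EuclideanSpace ℝ (Fin 3)) : EuclideanSpace ℝ (Fin 3) :=
  WithLp.toLp 2 ![v 0, v 1, 0]

noncomputable def vtx (n m : ℕ) : EuclideanSpace ℝ (Fin 3) :=
  WithLp.toLp 2 ![Real.cos (2 * π * m / n), Real.sin (2 * π * m / n), 0]

noncomputable def wvec (n m : ℕ) : EuclideanSpace ℝ (Fin 3) :=
  WithLp.toLp 2 ![Real.sin (2 * π * m / n), -Real.cos (2 * π * m / n), 0]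

lemma sin_pos_of_mem (n k : ℕ) (hk : k ∈ Finset.Icc 1 (n-1)) : 0 < Real.sin (k * π / n) := by
  simp only [Finset.mem_Icc] at hk
  have hn : (0:ℝ) < n := by exact_mod_cast (by omega : 0 < n)
  have hk0 : (0:ℝ) < k := by exact_mod_cast (by omega : 0 < k)
  apply Real.sin_pos_of_pos_of_lt_pi
  · positivity
  · rw [div_lt_iff₀ hn]
    have : (k:ℝ) < n := by exact_mod_cast (by omega : k < n)
    nlinarith [Real.pi_pos]

lemma refl_sum (n : ℕ) : ∑ k ∈ Finset.Icc 1 (n-1), Real.cos (k * π / n) / (Real.sin (k * π / n))^2 = 0 := by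
  apply Finset.sum_involution (g := fun k _ => n - k)
  · intro k hk
    simp only [Finset.mem_Icc] at hk
    have hn : (n:ℝ) ≠ 0 := by exact_mod_cast (by omega : n ≠ 0)
    have hcast : ((n - k : ℕ) : ℝ) = (n:ℝ) - k := by
      have : k ≤ n := by omega
      push_cast [this]; ring
    have harg : ((n - k : ℕ) : ℝ) * π / n = π - k * π / n := by
      rw [hcast]; field_simp
    rw [harg, Real.sin_pi_sub, Real.cos_pi_sub]
    rw [neg_div]; ring
  · intro k hk hne heq
    apply hne
    simp only [Finset.mem_Icc] at hk
    have h2k : n = 2 * k := by omega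
    have : (k:ℝ) * π / n = π / 2 := by
      have hk0 : (k:ℝ) ≠ 0 := by exact_mod_cast (by omega : k ≠ 0)
      rw [h2k]; push_cast; field_simp
    rw [this, Real.cos_pi_div_two, zero_div]
  · intro k hk
    simp only [Finset.mem_Icc] at hk ⊢
    omega
  · intro k hk
    simp only [Finset.mem_Icc] at hk
    omega

lemma vtx_mod (n : ℕ) (hn : 0 < n) (m : ℕ) : vtx n (m % n) = vtx n m := by
  have hq : n * (m / n) + m % n = m := Nat.div_add_mod m n
  have hn' : (n:ℝ) ≠ 0 := by exact_mod_cast hn.ne'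
  have harg : 2 * π * (m:ℝ) / n = 2 * π * ((m % n : ℕ):ℝ) / n + (m / n : ℕ) * (2 * π) := by
    have : (n:ℝ) * ((m / n : ℕ):ℝ) + ((m % n : ℕ):ℝ) = (m:ℝ) := by exact_mod_cast hq
    field_simp
    linear_combination (-1) * this
  unfold vtx
  rw [harg, Real.cos_add_nat_mul_two_pi, Real.sin_add_nat_mul_two_pi]

lemma key_lemma (n J k : ℕ) (hn : 0 < n) (hs : 0 < Real.sin (k * π / n)) :
    (1 / ‖vtx n J - vtx n (J + k)‖ ^ 3) • (vtx n J - vtx n (J + k))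
      = (1 / (4 * Real.sin (k * π / n))) • vtx n J
        + (Real.cos (k * π / n) / (4 * Real.sin (k * π / n) ^ 2)) • wvec n J := by
  have hn' : (n:ℝ) ≠ 0 := by exact_mod_cast hn.ne'
  set θ := 2 * π * (J:ℝ) / n with hθ
  set φ := (k:ℝ) * π / n with hφ
  set s := Real.sin φ with hsdef
  set co := Real.cos φ with hco
  have hsplit : 2 * π * ((J + k : ℕ):ℝ) / n = θ + 2 * φ := by
    rw [hθ, hφ]; push_cast; field_simp
  have h0 : (vtx n J - vtx n (J + k)) 0
      = 2 * s^2 * Real.cos θ + 2 * s * co * Real.sin θ := by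
    simp only [vtx, PiLp.sub_apply, hsplit]
    simp [Real.cos_add, Real.cos_two_mul, Real.sin_two_mul]
    linear_combination (-2 * Real.cos θ) * Real.sin_sq_add_cos_sq φ
  have h1 : (vtx n J - vtx n (J + k)) 1
      = 2 * s^2 * Real.sin θ - 2 * s * co * Real.cos θ := by
    simp only [vtx, PiLp.sub_apply, hsplit]
    simp [Real.sin_add, Real.cos_two_mul, Real.sin_two_mul]
    linear_combination (-2 * Real.sin θ) * Real.sin_sq_add_cos_sq φ
  have h2 : (vtx n J - vtx n (J + k)) 2 = 0 := by
    simp [vtx, PiLp.sub_apply]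
  have hnorm : ‖vtx n J - vtx n (J + k)‖ = 2 * s := by
    rw [EuclideanSpace.norm_eq, Fin.sum_univ_three, h0, h1, h2]
    rw [show ‖(2 * s^2 * Real.cos θ + 2 * s * co * Real.sin θ)‖^2
        + ‖(2 * s^2 * Real.sin θ - 2 * s * co * Real.cos θ)‖^2 + ‖(0:ℝ)‖^2 = (2*s)^2 by
      simp only [Real.norm_eq_abs, sq_abs, norm_zero]
      linear_combination (4*s^4 + 4*s^2*co^2) * Real.sin_sq_add_cos_sq θ
        + (4*s^2) * Real.sin_sq_add_cos_sq φ]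
    exact Real.sqrt_sq (by positivity)
  have hvk : vtx n J - vtx n (J + k) = (2*s^2) • vtx n J + (2*s*co) • wvec n J := by
    ext c
    fin_cases c
    · simpa [vtx, wvec, PiLp.sub_apply, PiLp.add_apply, PiLp.smul_apply] using h0
    · simp [vtx, wvec, PiLp.sub_apply, PiLp.add_apply, PiLp.smul_apply] at h1 ⊢; rw [h1, hθ]; ring
    · simp [vtx, wvec, PiLp.sub_apply, PiLp.add_apply, PiLp.smul_apply]
  have hs' : s ≠ 0 := hs.ne'
  rw [hnorm, hvk]
  match_scalars
  · field_simp; ring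
  · field_simp; ring

theorem polygon_is_critical_point (n : ℕ) (hn : 2 ≤ n) (μ : ℝ)
    (s₁ : ℝ) (hs₁ : s₁ = (1/4) * ∑ j ∈ Finset.Icc 1 (n-1), 1 / Real.sin (j * π / n))
    (ω : ℝ) (hω : ω = μ - s₁)
    (a : Fin n → EuclideanSpace ℝ (Fin 3))
    (ha : ∀ j : Fin n, a j = WithLp.toLp 2 ![Real.cos (2 * π * j / n), Real.sin (2 * π * j / n), 0]) :
    ∀ j : Fin n,
      ω • Ibar (a j) - (μ / ‖a j‖^3) • a j
          + ∑ i ∈ Finset.univ.erase j, (1 / ‖a j - a i‖^3) • (a j - a i)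
        = (ω - μ + s₁) • a j ∧
      ω • Ibar (a j) - (μ / ‖a j‖^3) • a j
          + ∑ i ∈ Finset.univ.erase j, (1 / ‖a j - a i‖^3) • (a j - a i)
        = 0 := by
  have hn0 : 0 < n := by omega
  haveI : NeZero n := ⟨by omega⟩
  intro j
  have ha' : ∀ i : Fin n, a i = vtx n i.val := fun i => ha i
  -- norm of a j is 1
  have hnorm1 : ‖a j‖ = 1 := by
    rw [ha' j, EuclideanSpace.norm_eq, Fin.sum_univ_three]
    simp only [vtx, Matrix.cons_val_zero, Matrix.cons_val_one, Matrix.head_cons,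
      Matrix.cons_val_two, Matrix.tail_cons, Real.norm_eq_abs, sq_abs, norm_zero]
    rw [show Real.cos (2 * π * (j.val:ℝ) / n) ^ 2 + Real.sin (2 * π * (j.val:ℝ) / n) ^ 2 + 0 ^ 2
        = 1 by rw [add_comm (Real.cos _ ^2), Real.sin_sq_add_cos_sq]; ring]
    exact Real.sqrt_one
  -- Ibar fixes a j
  have hIbar : Ibar (a j) = a j := by
    rw [ha' j]
    ext c
    fin_cases c <;> simp [Ibar, vtx]
  -- the main sum computation
  have hsum : ∑ i ∈ Finset.univ.erase j, (1 / ‖a j - a i‖^3) • (a j - a i) = s₁ • a j := by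
    have hzero : (1 / ‖a j - a j‖^3) • (a j - a j) = 0 := by simp
    rw [Finset.sum_erase (f := fun i => (1 / ‖a j - a i‖^3) • (a j - a i)) (a := j) Finset.univ hzero]
    have hshift : ∑ i : Fin n, (1 / ‖a j - a i‖^3) • (a j - a i)
        = ∑ k : Fin n, (1 / ‖a j - a (j + k)‖^3) • (a j - a (j + k)) :=
      (Fintype.sum_equiv (Equiv.addLeft j)
        (fun k => (1 / ‖a j - a (j + k)‖^3) • (a j - a (j + k)))
        (fun i => (1 / ‖a j - a i‖^3) • (a j - a i)) (fun k => rfl)).symm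
    rw [hshift]
    have hfa : ∀ k : Fin n, (1 / ‖a j - a (j + k)‖^3) • (a j - a (j + k))
        = (1 / ‖vtx n j.val - vtx n (j.val + k.val)‖^3) • (vtx n j.val - vtx n (j.val + k.val)) := by
      intro k
      rw [ha' j, ha' (j + k), Fin.val_add, vtx_mod n hn0]
    simp only [hfa]
    rw [Fin.sum_univ_eq_sum_range (fun m =>
      (1 / ‖vtx n j.val - vtx n (j.val + m)‖^3) • (vtx n j.val - vtx n (j.val + m))) n]
    rw [← Finset.sum_subset (show Finset.Icc 1 (n-1) ⊆ Finset.range n by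
        intro x hx; simp only [Finset.mem_Icc] at hx; simp only [Finset.mem_range]; omega)
      (by
        intro x hx hx'
        simp only [Finset.mem_range] at hx
        simp only [Finset.mem_Icc] at hx'
        have : x = 0 := by omega
        subst this
        simp)]
    have hcongr : ∑ m ∈ Finset.Icc 1 (n-1),
        (1 / ‖vtx n j.val - vtx n (j.val + m)‖^3) • (vtx n j.val - vtx n (j.val + m))
        = ∑ m ∈ Finset.Icc 1 (n-1),
          ((1 / (4 * Real.sin (m * π / n))) • vtx n j.val
            + (Real.cos (m * π / n) / (4 * Real.sin (m * π / n) ^ 2)) • wvec n j.val) :=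
      Finset.sum_congr rfl fun m hm => key_lemma n j.val m hn0 (sin_pos_of_mem n m hm)
    rw [hcongr, Finset.sum_add_distrib, ← Finset.sum_smul, ← Finset.sum_smul]
    have hc1 : ∑ m ∈ Finset.Icc 1 (n-1), 1 / (4 * Real.sin (m * π / n)) = s₁ := by
      rw [hs₁, Finset.mul_sum]
      exact Finset.sum_congr rfl fun m hm => by ring
    have hc2 : ∑ m ∈ Finset.Icc 1 (n-1),
        Real.cos (m * π / n) / (4 * Real.sin (m * π / n) ^ 2) = 0 := by
      have := refl_sum n
      calc ∑ m ∈ Finset.Icc 1 (n-1), Real.cos (m * π / n) / (4 * Real.sin (m * π / n) ^ 2)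
          = (1/4) * ∑ m ∈ Finset.Icc 1 (n-1),
              Real.cos (m * π / n) / (Real.sin (m * π / n) ^ 2) := by
            rw [Finset.mul_sum]; exact Finset.sum_congr rfl fun m hm => by ring
        _ = 0 := by rw [this, mul_zero]
    rw [hc1, hc2, zero_smul, add_zero, ← ha' j]
  rw [hsum, hIbar, hnorm1]
  constructor
  · rw [one_pow, div_one]
    module
  · rw [one_pow, div_one]
    have : ω - μ + s₁ = 0 := by rw [hω]; ring
    rw [show ω • a j - μ • a j + s₁ • a j = (ω - μ + s₁) • a j by module, this, zero_smul]
end
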